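/- Let δ ∈ {0,1}. For any integer N (positive or negative), the sum over n ≥ 0 of q^{n^2 + n(N-δ)} / ((q;q)_n (q;q)_{n+N}) equals (1 + δ q^N) / (q;q)_∞, with the convention 1/(q;q)_k = 0 for integers k < 0. -/

import Mathlib

open scoped BigOperators

/-- Finite q-Pochhammer symbol $(a;q)_n$. -/
noncomputable def qPoch (q a : ℂ) (n : ℕ) : ℂ := ∏ j ∈ Finset.range n, (1 - a * q ^ j)

/-- Infinite q-Pochhammer symbol $(a;q)_\infty$. -/
noncomputable def qPochInf (q a : ℂ) : ℂ := ∏' j : ℕ, (1 - a * q ^ j)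

/-- Reciprocal $1/(q;q)_k$ for an integer index, vanishing for $k<0$. -/
noncomputable def qPochRecipZ (q : ℂ) (k : ℤ) : ℂ :=
  if k < 0 then 0 else (qPoch q q k.toNat)⁻¹

/-!
Write `S_δ(N)` for the series. Splitting off the factor `1 - q^(n+N+1)` of `(q;q)_(n+N+1)`,
resp. the factor `1 - q^(n+1)` of `(q;q)_(n+1)`, gives
`S₀(N) = S₁(N+1) - q^(N+1) S₀(N+1)` and `S₁(N) = S₀(N) + q^N S₀(N+1)`.
Hence `d(N) = S₀(N) - S₀(N+1)` satisfies `d(N) = -q^(N+1) d(N+1)`. As `d` is bounded on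
`N ≥ 0`, iterating forces `d(N) = 0` there, and the recursion carries this down to all `N`.
So `S₀` is constant; letting `N → ∞`, by dominated convergence only the term `n = 0`, namely
`1/(q;q)_N`, survives, so `S₀ ≡ 1/(q;q)_∞`, and then `S₁(N) = (1 + q^N)/(q;q)_∞`.
-/

open Filter Topology

theorem eq_zero_of_bounded_of_eq_mul_add_one {R : Type*} [NormedRing R] {f a : ℤ → R} {r C : ℝ}
    (hr : r < 1) (ha : ∀ N, 0 ≤ N → ‖a N‖ ≤ r) (hfC : ∀ N, 0 ≤ N → ‖f N‖ ≤ C)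
    (hf : ∀ N, f N = a N * f (N + 1)) (N : ℤ) : f N = 0 := by
  have hr0 : 0 ≤ r := (norm_nonneg _).trans (ha 0 le_rfl)
  have hdecay : ∀ k : ℕ, ∀ N, 0 ≤ N → ‖f N‖ ≤ r ^ k * C := by
    intro k
    induction k with
    | zero => simpa using hfC
    | succ k ih =>
      intro N hN
      calc ‖f N‖ = ‖a N * f (N + 1)‖ := by rw [← hf]
        _ ≤ ‖a N‖ * ‖f (N + 1)‖ := norm_mul_le _ _
        _ ≤ r * (r ^ k * C) := mul_le_mul (ha N hN) (ih _ (by omega)) (norm_nonneg _) hr0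
        _ = r ^ (k + 1) * C := by ring
  have hlim : Tendsto (fun k : ℕ => r ^ k * C) atTop (𝓝 0) := by
    simpa using (tendsto_pow_atTop_nhds_zero_of_lt_one hr0 hr).mul_const C
  have hnonneg : ∀ N, 0 ≤ N → f N = 0 := fun N hN =>
    norm_le_zero_iff.mp (ge_of_tendsto' hlim fun k => hdecay k N hN)
  induction N using Int.inductionOn' (b := 0) with
  | zero => exact hnonneg 0 le_rfl
  | succ k hk _ => exact hnonneg _ (by omega)
  | pred k _ ih => rw [hf, sub_add_cancel, ih, mul_zero]

section QPochhammer

variable {q : ℂ}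

@[simp]
theorem qPoch_zero (q a : ℂ) : qPoch q a 0 = 1 :=
  Finset.prod_range_zero _

theorem qPoch_succ (q a : ℂ) (n : ℕ) : qPoch q a (n + 1) = qPoch q a n * (1 - a * q ^ n) :=
  Finset.prod_range_succ _ n

theorem one_sub_mul_pow_ne_zero {a : ℂ} (ha : ‖a‖ < 1) (hq : ‖q‖ ≤ 1) (j : ℕ) :
    1 - a * q ^ j ≠ 0 := by
  refine sub_ne_zero.mpr fun h => ?_
  have : ‖a * q ^ j‖ < 1 := by
    rw [norm_mul, norm_pow]
    exact mul_lt_one_of_nonneg_of_lt_one_left (norm_nonneg a) ha (pow_le_one₀ (norm_nonneg q) hq)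
  rw [← h, norm_one] at this
  exact this.false

theorem summable_norm_neg_mul_pow (hq : ‖q‖ < 1) (a : ℂ) :
    Summable fun j : ℕ => ‖-(a * q ^ j)‖ := by
  simpa [norm_mul, norm_pow] using
    (summable_geometric_of_lt_one (norm_nonneg q) hq).mul_left ‖a‖

theorem tendsto_qPoch (hq : ‖q‖ < 1) (a : ℂ) :
    Tendsto (qPoch q a) atTop (𝓝 (qPochInf q a)) := by
  have h := (multipliable_one_add_of_summable (summable_norm_neg_mul_pow hq a)).hasProd
  have h' := h.tendsto_prod_nat
  simp only [← sub_eq_add_neg] at h'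
  exact h'

theorem qPochInf_ne_zero {a : ℂ} (ha : ‖a‖ < 1) (hq : ‖q‖ < 1) : qPochInf q a ≠ 0 := by
  have h := tprod_one_add_ne_zero_of_summable (fun j => by
    rw [← sub_eq_add_neg]; exact one_sub_mul_pow_ne_zero ha hq.le j)
    (summable_norm_neg_mul_pow hq a)
  simpa [qPochInf, ← sub_eq_add_neg] using h

theorem inv_qPoch_succ_mul {a : ℂ} (ha : ‖a‖ < 1) (hq : ‖q‖ ≤ 1) (n : ℕ) :
    (qPoch q a (n + 1))⁻¹ * (1 - a * q ^ n) = (qPoch q a n)⁻¹ := by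
  rw [qPoch_succ, mul_inv, mul_assoc, inv_mul_cancel₀ (one_sub_mul_pow_ne_zero ha hq n), mul_one]

theorem exists_norm_inv_qPoch_le (hq : ‖q‖ < 1) : ∃ C, ∀ n, ‖(qPoch q q n)⁻¹‖ ≤ C := by
  have h := (tendsto_qPoch hq q).inv₀ (qPochInf_ne_zero hq hq)
  obtain ⟨C, hC⟩ := (Metric.isBounded_range_of_tendsto _ h).exists_norm_le
  exact ⟨C, fun n => hC _ ⟨n, rfl⟩⟩

theorem qPochRecipZ_add_one_mul (hq : ‖q‖ < 1) (k : ℤ) :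
    qPochRecipZ q (k + 1) * (1 - q ^ (k + 1)) = qPochRecipZ q k := by
  unfold qPochRecipZ
  rcases lt_trichotomy k (-1) with h | rfl | h
  · rw [if_pos (by omega), if_pos (by omega), zero_mul]
  · norm_num
  · lift k to ℕ using (by omega)
    rw [if_neg (by omega), if_neg (by omega), show ((k : ℤ) + 1).toNat = k + 1 by omega,
      Int.toNat_natCast, ← Nat.cast_succ, zpow_natCast, pow_succ', inv_qPoch_succ_mul hq hq.le]

theorem qPochRecipZ_natCast (q : ℂ) (n : ℕ) : qPochRecipZ q n = (qPoch q q n)⁻¹ := by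
  simp [qPochRecipZ]

theorem norm_qPochRecipZ_le {C : ℝ} (hC : ∀ n, ‖(qPoch q q n)⁻¹‖ ≤ C) (k : ℤ) :
    ‖qPochRecipZ q k‖ ≤ C := by
  unfold qPochRecipZ
  split_ifs
  · simpa using (norm_nonneg _).trans (hC 0)
  · exact hC _

end QPochhammer

noncomputable def qGaussTerm (q : ℂ) (δ N : ℤ) (n : ℕ) : ℂ :=
  q ^ ((n : ℤ) ^ 2 + (n : ℤ) * (N - δ)) * (qPoch q q n)⁻¹ * qPochRecipZ q ((n : ℤ) + N)

noncomputable def qGaussSum (q : ℂ) (δ N : ℤ) : ℂ := ∑' n : ℕ, qGaussTerm q δ N n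

section QGauss

variable {q : ℂ}

theorem qGaussTerm_zero_eq_sub (hq : ‖q‖ < 1) (hq0 : q ≠ 0) (N : ℤ) (n : ℕ) :
    qGaussTerm q 0 N n = qGaussTerm q 1 (N + 1) n - q ^ (N + 1) * qGaussTerm q 0 (N + 1) n := by
  have hexp : q ^ (N + 1) * q ^ ((n : ℤ) ^ 2 + n * (N + 1 - 0))
      = q ^ ((n : ℤ) ^ 2 + n * (N - 0)) * q ^ ((n : ℤ) + N + 1) := by
    rw [← zpow_add₀ hq0, ← zpow_add₀ hq0]; ring_nf
  simp only [qGaussTerm]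
  rw [← qPochRecipZ_add_one_mul hq, show (n : ℤ) + (N + 1) = n + N + 1 by ring,
    show N + 1 - 1 = N - 0 by ring]
  linear_combination (qPoch q q n)⁻¹ * qPochRecipZ q (n + N + 1) * hexp

theorem qGaussTerm_one_succ_sub_zero_succ (hq : ‖q‖ < 1) (hq0 : q ≠ 0) (N : ℤ) (n : ℕ) :
    qGaussTerm q 1 N (n + 1) - qGaussTerm q 0 N (n + 1) = q ^ N * qGaussTerm q 0 (N + 1) n := by
  have hexp : q ^ (((n + 1 : ℕ) : ℤ) ^ 2 + (n + 1 : ℕ) * (N - 0))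
      = q ^ (((n + 1 : ℕ) : ℤ) ^ 2 + (n + 1 : ℕ) * (N - 1)) * (q * q ^ n) := by
    rw [← pow_succ', ← zpow_natCast, ← zpow_add₀ hq0]; ring_nf
  have hexp' : q ^ N * q ^ ((n : ℤ) ^ 2 + n * (N + 1 - 0))
      = q ^ (((n + 1 : ℕ) : ℤ) ^ 2 + (n + 1 : ℕ) * (N - 1)) := by
    rw [← zpow_add₀ hq0]; push_cast; ring_nf
  simp only [qGaussTerm]
  rw [hexp, ← hexp', show ((n + 1 : ℕ) : ℤ) + N = n + (N + 1) by push_cast; ring]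
  linear_combination q ^ N * q ^ ((n : ℤ) ^ 2 + n * (N + 1 - 0)) * qPochRecipZ q (n + (N + 1)) *
    inv_qPoch_succ_mul hq hq.le n

theorem norm_qGaussTerm_le (hq : ‖q‖ < 1) (hq0 : q ≠ 0) {C : ℝ}
    (hC : ∀ n, ‖(qPoch q q n)⁻¹‖ ≤ C) {δ N : ℤ} {n k : ℕ}
    (hk : (k : ℤ) ≤ (n : ℤ) ^ 2 + n * (N - δ)) :
    ‖qGaussTerm q δ N n‖ ≤ C ^ 2 * ‖q‖ ^ k := by
  have hpow : ‖q‖ ^ ((n : ℤ) ^ 2 + n * (N - δ)) ≤ ‖q‖ ^ k := by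
    rw [← zpow_natCast]
    exact zpow_le_zpow_right_of_le_one₀ (norm_pos_iff.mpr hq0) hq.le hk
  have hR := norm_qPochRecipZ_le hC ((n : ℤ) + N)
  have hC0 : 0 ≤ C := (norm_nonneg _).trans (hC 0)
  rw [qGaussTerm, norm_mul, norm_mul, norm_zpow]
  calc _ ≤ ‖q‖ ^ k * C * C := by gcongr; exact hC n
    _ = C ^ 2 * ‖q‖ ^ k := by ring

theorem summable_qGaussTerm (hq : ‖q‖ < 1) (hq0 : q ≠ 0) (δ N : ℤ) :
    Summable (qGaussTerm q δ N) := by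
  obtain ⟨C, hC⟩ := exists_norm_inv_qPoch_le hq
  refine .of_norm_bounded_eventually_nat
    ((summable_geometric_of_lt_one (norm_nonneg q) hq).mul_left (C ^ 2)) ?_
  filter_upwards [eventually_ge_atTop (1 + δ - N).toNat] with n hn
  exact norm_qGaussTerm_le hq hq0 hC (by nlinarith [Int.toNat_le.mp hn])

theorem qGaussSum_zero_eq_sub (hq : ‖q‖ < 1) (hq0 : q ≠ 0) (N : ℤ) :
    qGaussSum q 0 N = qGaussSum q 1 (N + 1) - q ^ (N + 1) * qGaussSum q 0 (N + 1) := by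
  rw [qGaussSum, qGaussSum, qGaussSum, ← tsum_mul_left,
    ← (summable_qGaussTerm hq hq0 1 (N + 1)).tsum_sub
      ((summable_qGaussTerm hq hq0 0 (N + 1)).mul_left _)]
  exact tsum_congr (qGaussTerm_zero_eq_sub hq hq0 N)

theorem qGaussSum_one_eq_add (hq : ‖q‖ < 1) (hq0 : q ≠ 0) (N : ℤ) :
    qGaussSum q 1 N = qGaussSum q 0 N + q ^ N * qGaussSum q 0 (N + 1) := by
  have hsub := (summable_qGaussTerm hq hq0 1 N).sub (summable_qGaussTerm hq hq0 0 N)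
  rw [← sub_eq_iff_eq_add', qGaussSum, qGaussSum, qGaussSum,
    ← (summable_qGaussTerm hq hq0 1 N).tsum_sub (summable_qGaussTerm hq hq0 0 N),
    hsub.tsum_eq_zero_add, ← tsum_mul_left]
  simp only [qGaussTerm_one_succ_sub_zero_succ hq hq0]
  simp [qGaussTerm]

theorem qGaussSum_zero_sub_succ (hq : ‖q‖ < 1) (hq0 : q ≠ 0) (N : ℤ) :
    qGaussSum q 0 N - qGaussSum q 0 (N + 1)
      = -q ^ (N + 1) * (qGaussSum q 0 (N + 1) - qGaussSum q 0 (N + 1 + 1)) := by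
  linear_combination qGaussSum_zero_eq_sub hq hq0 N + qGaussSum_one_eq_add hq hq0 (N + 1)

theorem norm_qGaussSum_zero_le (hq : ‖q‖ < 1) (hq0 : q ≠ 0) {C : ℝ}
    (hC : ∀ n, ‖(qPoch q q n)⁻¹‖ ≤ C) {N : ℤ} (hN : 0 ≤ N) :
    ‖qGaussSum q 0 N‖ ≤ C ^ 2 * (1 - ‖q‖)⁻¹ :=
  tsum_of_norm_bounded ((hasSum_geometric_of_lt_one (norm_nonneg q) hq).mul_left (C ^ 2))
    fun n => norm_qGaussTerm_le hq hq0 hC (by nlinarith)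

theorem tendsto_qGaussSum_zero (hq : ‖q‖ < 1) (hq0 : q ≠ 0) :
    Tendsto (fun m : ℕ => qGaussSum q 0 m) atTop (𝓝 (qPochInf q q)⁻¹) := by
  obtain ⟨C, hC⟩ := exists_norm_inv_qPoch_le hq
  have hterm : ∀ n, Tendsto (fun m : ℕ => qGaussTerm q 0 m n) atTop
      (𝓝 (if n = 0 then (qPochInf q q)⁻¹ else 0)) := by
    rintro (_ | n)
    · simpa [qGaussTerm, qPochRecipZ_natCast] using
        (tendsto_qPoch hq q).inv₀ (qPochInf_ne_zero hq hq)
    · refine squeeze_zero_norm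
        (fun m => norm_qGaussTerm_le hq hq0 hC (k := m) (by push_cast; nlinarith)) ?_
      simpa using (tendsto_pow_atTop_nhds_zero_of_lt_one (norm_nonneg q) hq).const_mul (C ^ 2)
  have h := tendsto_tsum_of_dominated_convergence
    ((summable_geometric_of_lt_one (norm_nonneg q) hq).mul_left (C ^ 2)) hterm
    (.of_forall fun m n => norm_qGaussTerm_le hq hq0 hC (by nlinarith))
  rw [tsum_ite_eq] at h
  exact h

theorem qGaussSum_zero_eq_inv_qPochInf (hq : ‖q‖ < 1) (hq0 : q ≠ 0) (N : ℤ) :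
    qGaussSum q 0 N = (qPochInf q q)⁻¹ := by
  obtain ⟨C, hC⟩ := exists_norm_inv_qPoch_le hq
  have hdiff : ∀ N, qGaussSum q 0 N - qGaussSum q 0 (N + 1) = 0 := by
    refine eq_zero_of_bounded_of_eq_mul_add_one hq (a := fun N => -q ^ (N + 1))
      (C := 2 * (C ^ 2 * (1 - ‖q‖)⁻¹)) (fun N hN => ?_) (fun N hN => ?_)
      (qGaussSum_zero_sub_succ hq hq0)
    · rw [norm_neg, norm_zpow]
      simpa using zpow_le_zpow_right_of_le_one₀ (norm_pos_iff.mpr hq0) hq.le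
        (show (1 : ℤ) ≤ N + 1 by omega)
    · linarith [norm_sub_le (qGaussSum q 0 N) (qGaussSum q 0 (N + 1)),
        norm_qGaussSum_zero_le hq hq0 hC hN,
        norm_qGaussSum_zero_le hq hq0 hC (by omega : 0 ≤ N + 1)]
  have hperiodic : Function.Periodic (qGaussSum q 0) 1 := fun N =>
    (sub_eq_zero.mp (hdiff N)).symm
  have hconst : ∀ N, qGaussSum q 0 N = qGaussSum q 0 0 := fun N => by
    simpa using hperiodic.int_mul_eq N
  rw [hconst, ← tendsto_const_nhds_iff (l := (atTop : Filter ℕ))]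
  simpa only [hconst] using tendsto_qGaussSum_zero hq hq0

end QGauss

/-- Specialised q-Gauss summation: for $\delta\in\{0,1\}$ and any integer $N$,
$\sum_{n\ge0} q^{n^2+n(N-\delta)}/((q;q)_n (q;q)_{n+N}) = (1+\delta q^N)/(q;q)_\infty$. -/
theorem qGauss_special (q : ℂ) (hq : ‖q‖ < 1) (hq0 : q ≠ 0)
    (δ : ℤ) (hδ : δ = 0 ∨ δ = 1) (N : ℤ) :
    ∑' n : ℕ, q ^ ((n : ℤ) ^ 2 + (n : ℤ) * (N - δ)) * (qPoch q q n)⁻¹ *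
        qPochRecipZ q ((n : ℤ) + N)
      = (1 + (δ : ℂ) * q ^ N) * (qPochInf q q)⁻¹ := by
  change qGaussSum q δ N = _
  rcases hδ with rfl | rfl
  · simp [qGaussSum_zero_eq_inv_qPochInf hq hq0]
  · rw [qGaussSum_one_eq_add hq hq0, qGaussSum_zero_eq_inv_qPochInf hq hq0,
      qGaussSum_zero_eq_inv_qPochInf hq hq0]
    push_cast
    ring
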